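/- arXiv:1709.03574 — 5 statements merged into one kernel-verified Lean document; each statement's English description precedes it below -/
import Mathlib

section
/- Let G be a group acting on a finite set E, let r be a binary relation on E that is G-equivariant (r x y implies r (g • x) (g • y) for all g ∈ G), and suppose there is a linear order ≤ on E such that r x y implies x ≤ y. Then for any two distinct elements x, y lying in the same G-orbit, r x y does not hold. -/
/-- No relation between distinct elements of the same `G`-orbit, for a `G`-equivariant
relation compatible with a linear order on a finite set. -/
theorem stmt_0 {G E : Type*} [Group G] [Fintype E] [MulAction G E]
    (r : E → E → Prop) (hequiv : ∀ (g : G) (x y : E), r x y → r (g • x) (g • y))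
    (le : E → E → Prop) [IsLinearOrder E le] (hcomp : ∀ x y : E, r x y → le x y)
    (x y : E) (hne : x ≠ y) (horb : ∃ g : G, g • x = y) : ¬ r x y := by
  intro hr
  obtain ⟨g, hg⟩ := horb
  -- chain: le (g • x) (g^(k+1) • x) for all k
  have key : ∀ k : ℕ, le (g • x) (g ^ (k + 1) • x) := by
    intro k
    induction k with
    | zero => simpa using IsLinearOrder.toIsPartialOrder.toIsPreorder.toRefl.refl (g • x)
    | succ n ih =>
        have h1 : r (g ^ (n + 1) • x) (g ^ (n + 2) • x) := by
          have := hequiv (g ^ (n + 1)) x y hr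
          rw [← hg] at this
          simpa [smul_smul, pow_succ, mul_assoc, mul_comm] using this
        exact IsLinearOrder.toIsPartialOrder.toIsPreorder.toIsTrans.trans _ _ _ ih
          (hcomp _ _ h1)
  -- the permutation induced by g has finite order n ≥ 1 with g^n • x = x
  set σ := MulAction.toPermHom G E g with hσ
  have hord : 0 < orderOf σ := orderOf_pos σ
  obtain ⟨m, hm⟩ := Nat.exists_eq_add_of_lt hord
  have hfix : g ^ orderOf σ • x = x := by
    have h1 : MulAction.toPermHom G E (g ^ orderOf σ) = 1 := by
      rw [map_pow]; exact pow_orderOf_eq_one σ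
    have h2 : MulAction.toPermHom G E (g ^ orderOf σ) x = x := by rw [h1]; rfl
    simpa [MulAction.toPermHom] using h2
  have hle : le (g • x) x := by
    have := key m
    rw [show m + 1 = orderOf σ by omega, hfix] at this
    exact this
  have := IsLinearOrder.toIsPartialOrder.toAntisymm.antisymm x (g • x)
    (by rw [hg]; exact hcomp _ _ hr) hle
  exact hne (this.trans hg)
end

section
/- Let G be a group acting on a finite set E, let r be a G-equivariant binary relation on E, and suppose there is a linear order ≤ on E with r x y → x ≤ y. Then for any two distinct G-orbits A and B, it cannot happen that both (there exist a ∈ A, b ∈ B with r a b) and (there exist b' ∈ B, a' ∈ A with r b' a'). In other words, the induced relation on the set of orbits is antisymmetric. -/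
open MulAction

lemma stmt_1_aux {G E : Type*} [Group G] [MulAction G E]
    (r : E → E → Prop) (hequiv : ∀ (g : G) (x y : E), r x y → r (g • x) (g • y))
    (le : E → E → Prop) [IsLinearOrder E le] (hcomp : ∀ x y : E, r x y → le x y)
    (a₀ b₀ m : E) (hm : m ∈ orbit G a₀)
    (a b : E) (ha : a ∈ orbit G a₀) (hb : b ∈ orbit G b₀) (hab : r a b)
    (hmax : ∀ x ∈ orbit G b₀, le x m) : m ∈ orbit G b₀ := by
  obtain ⟨g, hg⟩ := ha
  obtain ⟨h, hh⟩ := hm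
  obtain ⟨g', hg'⟩ := hb
  have hka : (h * g⁻¹) • a = m := by
    rw [← hg, ← hh, smul_smul, mul_assoc, inv_mul_cancel, mul_one]
  have hkb : (h * g⁻¹) • b ∈ orbit G b₀ := by
    rw [← hg', smul_smul]; exact mem_orbit _ _
  have h1 : le m ((h * g⁻¹) • b) := by
    rw [← hka]; exact hcomp _ _ (hequiv _ _ _ hab)
  have h2 : le ((h * g⁻¹) • b) m := hmax _ hkb
  have : m = (h * g⁻¹) • b := antisymm h1 h2
  rw [this]; exact hkb

/-- The relation induced on `G`-orbits by a `G`-equivariant relation compatible with a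
linear order is antisymmetric: two distinct orbits cannot be related in both directions. -/
theorem stmt_1 {G E : Type*} [Group G] [Fintype E] [MulAction G E]
    (r : E → E → Prop) (hequiv : ∀ (g : G) (x y : E), r x y → r (g • x) (g • y))
    (le : E → E → Prop) [IsLinearOrder E le] (hcomp : ∀ x y : E, r x y → le x y)
    (A B : Set E) (a₀ b₀ : E) (hA : A = MulAction.orbit G a₀) (hB : B = MulAction.orbit G b₀)
    (hAB : A ≠ B) :
    ¬ ((∃ a ∈ A, ∃ b ∈ B, r a b) ∧ (∃ b' ∈ B, ∃ a' ∈ A, r b' a')) := by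
  classical
  rintro ⟨⟨a, ha, b, hb, hab⟩, ⟨b', hb', a', ha', hba⟩⟩
  subst hA hB
  letI : LinearOrder E :=
  { le := le
    lt := fun x y => le x y ∧ ¬ le y x
    le_refl := fun x => refl_of le x
    le_trans := fun x y z => trans_of le
    le_antisymm := fun x y h1 h2 => antisymm h1 h2
    le_total := fun x y => total_of le x y
    toDecidableLE := Classical.decRel le }
  obtain ⟨m, hm, hmax⟩ := Set.Finite.exists_maximalFor id
    (orbit G a₀ ∪ orbit G b₀) (Set.toFinite _) ⟨a, Or.inl ha⟩
  have key : ∀ x ∈ orbit G a₀ ∪ orbit G b₀, le x m := by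
    intro x hx
    rcases total_of le x m with h | h
    · exact h
    · have := hmax hx h
      simp only [id] at this
      exact this
  have hAB' : orbit G a₀ ≠ orbit G b₀ := hAB
  cases hm with
  | inl hmA =>
    have : m ∈ orbit G b₀ :=
      stmt_1_aux r hequiv le hcomp a₀ b₀ m hmA a b ha hb hab
        (fun x hx => key x (Or.inr hx))
    exact hAB' ((orbit_eq_iff.mpr hmA).symm.trans (orbit_eq_iff.mpr this))
  | inr hmB =>
    have : m ∈ orbit G a₀ :=
      stmt_1_aux r hequiv le hcomp b₀ a₀ m hmB b' a' hb' ha' hba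
        (fun x hx => key x (Or.inl hx))
    exact hAB' ((orbit_eq_iff.mpr this).symm.trans (orbit_eq_iff.mpr hmB))
end

section
/- Let L/k be a finite Galois field extension with Galois group G. Then the k-algebra map L ⊗_k L → (G → L) sending a ⊗ b to the function g ↦ a · g(b) is an isomorphism of L-algebras (where L acts on the first tensor factor and diagonally on G → L). -/
open TensorProduct

/-- For a finite Galois extension `L/k` with Galois group `G`, the map
`L ⊗[k] L → (G → L)`, `a ⊗ b ↦ (g ↦ a * g b)`, is an isomorphism of `L`-algebras,
where `L` acts on the first tensor factor. -/
theorem stmt_2 (k L : Type*) [Field k] [Field L] [Algebra k L]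
    [FiniteDimensional k L] [IsGalois k L] :
    ∃ e : (L ⊗[k] L) ≃ₐ[L] ((L ≃ₐ[k] L) → L),
      ∀ a b : L, e (a ⊗ₜ[k] b) = fun g : L ≃ₐ[k] L => a * g b := by
  classical
  set G := L ≃ₐ[k] L
  -- the algebra map
  let f1 : L →ₐ[L] (G → L) := Pi.algHom (R := L) (A := fun _ : G => L) fun _ => AlgHom.id L L
  let f2 : L →ₐ[k] (G → L) := Pi.algHom (R := k) (A := fun _ : G => L) fun g : G => g.toAlgHom
  let φ : (L ⊗[k] L) →ₐ[L] (G → L) :=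
    Algebra.TensorProduct.lift f1 f2 fun _ _ => Commute.all _ _
  have hφ : ∀ a b : L, φ (a ⊗ₜ[k] b) = fun g : G => a * g b := by
    intro a b
    funext g
    simp [φ, f1, f2, Algebra.TensorProduct.lift_tmul]
  -- set up dimensions
  set n := Module.finrank k L with hn
  have hcard : Fintype.card G = n := by rw [Fintype.card_eq_nat_card]; exact IsGalois.card_aut_eq_finrank k L
  let b : Module.Basis (Fin n) k L := Module.finBasis k L
  let B : Module.Basis (Fin n) L (L ⊗[k] L) := b.baseChange L
  -- the evaluation map (L →ₗ[k] L) →ₗ[L] (Fin n → L)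
  let ev : (L →ₗ[k] L) →ₗ[L] (Fin n → L) :=
    { toFun := fun f => fun j => f (b j)
      map_add' := by intros; rfl
      map_smul' := by intros; rfl }
  have hev : Function.Injective ev := by
    intro f g hfg
    exact b.ext fun j => congrFun hfg j
  -- linear independence of the automorphisms evaluated at the basis
  have hli : LinearIndependent L fun g : G => (fun j => g (b j) : Fin n → L) := by
    have h1 : LinearIndependent L fun g : G => (g.toAlgHom.toLinearMap : L →ₗ[k] L) :=
      (linearIndependent_algHom_toLinearMap k L L).comp (fun g : G => g.toAlgHom)
        fun g₁ g₂ h => AlgEquiv.ext fun x => congrArg (fun ψ : L →ₐ[k] L => ψ x) h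
    exact h1.map' ev (LinearMap.ker_eq_bot.mpr hev)
  -- make it a square matrix
  let e : G ≃ Fin n := Fintype.equivFinOfCardEq hcard
  let M : Matrix (Fin n) (Fin n) L := fun i j => (e.symm i) (b j)
  have hM : IsUnit M := by
    rw [← Matrix.linearIndependent_rows_iff_isUnit]
    exact hli.comp e.symm e.symm.injective
  -- columns of M are linearly independent
  have hcols : LinearIndependent L fun j : Fin n => (fun i => (e.symm i) (b j) : Fin n → L) :=
    Matrix.linearIndependent_cols_iff_isUnit.mpr hM
  -- hence the vectors w j := fun g => g (b j) in G → L are independent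
  have hw : LinearIndependent L fun j : Fin n => (fun g : G => g (b j) : G → L) := by
    let r : (G → L) ≃ₗ[L] (Fin n → L) := LinearEquiv.funCongrLeft L L e.symm
    apply LinearIndependent.of_comp r.toLinearMap
    exact hcols
  -- injectivity of φ
  have hinj : Function.Injective φ := by
    rw [injective_iff_map_eq_zero]
    intro x hx
    have hrepr : x = ∑ j : Fin n, B.repr x j • B j := (B.sum_repr x).symm
    have h0 : ∑ j : Fin n, B.repr x j • (fun g : G => g (b j) : G → L) = 0 := by
      have := congrArg φ hrepr.symm
      rw [hx, map_sum] at this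
      simpa [B, Module.Basis.baseChange_apply, hφ] using this
    have hz := linearIndependent_iff'.mp hw Finset.univ (fun j => B.repr x j) h0
    rw [hrepr]
    simp [fun j => hz j (Finset.mem_univ j)]
  have hsurj : Function.Surjective φ := by
    have hd : Module.finrank L (L ⊗[k] L) = Module.finrank L (G → L) := by
      rw [Module.finrank_eq_card_basis B, Module.finrank_pi, hcard, Fintype.card_fin]
    exact (LinearMap.injective_iff_surjective_of_finrank_eq_finrank hd).mp hinj
  exact ⟨AlgEquiv.ofBijective φ ⟨hinj, hsurj⟩, hφ⟩
end

section
/- Let L/k be a finite Galois field extension with Galois group G and let V be a finite-dimensional L-vector space. Then V ⊗_k L, regarded as an L-module via the second tensor factor, is isomorphic as an L ⊗_k L-module to the direct sum over g ∈ G of the twists V_g, where V_g denotes V with L ⊗_k L acting by (a ⊗ b) · v = a · g(b) · v. -/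
open TensorProduct

section Aux

variable (k L : Type*) [Field k] [Field L] [Algebra k L]
    [FiniteDimensional k L] [IsGalois k L]

/-- The canonical `L`-algebra map `L ⊗[k] L → ((L ≃ₐ[k] L) → L)`,
`a ⊗ b ↦ (g ↦ a * g b)`. -/
noncomputable def psiAux : (L ⊗[k] L) →ₗ[L] ((L ≃ₐ[k] L) → L) :=
  LinearMap.pi fun g =>
    (Algebra.TensorProduct.lift (AlgHom.id L L) g.toAlgHom
      (fun _ _ => Commute.all _ _)).toLinearMap

@[simp] lemma psiAux_tmul (a b : L) (g : L ≃ₐ[k] L) :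
    psiAux k L (a ⊗ₜ[k] b) g = a * g b := by
  simp [psiAux]

lemma psiAux_surjective : Function.Surjective (psiAux k L) := by
  classical
  rw [← LinearMap.range_eq_top]
  by_contra hW
  obtain ⟨f, hf0, hf⟩ := Submodule.exists_dual_map_eq_bot_of_lt_top
    (lt_top_iff_ne_top.2 hW) inferInstance
  have hfW : ∀ x, f (psiAux k L x) = 0 := by
    intro x
    have : psiAux k L x ∈ LinearMap.range (psiAux k L) := ⟨x, rfl⟩
    have := Submodule.mem_map_of_mem (f := f) this
    rw [hf] at this
    exact (Submodule.mem_bot L).1 this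
  set a : (L ≃ₐ[k] L) → L := fun g => f (Pi.single g 1) with ha
  -- The functions `g` are linearly independent over `L` (Dedekind).
  have hLI : LinearIndependent L
      (fun g : L ≃ₐ[k] L => g.toAlgHom.toLinearMap) := by
    refine (linearIndependent_toLinearMap k L L).comp
      (fun g : L ≃ₐ[k] L => g.toAlgHom) ?_
    intro g₁ g₂ h
    ext x
    exact DFunLike.congr_fun h x
  have key : ∀ b : L, ∑ g : L ≃ₐ[k] L, a g * g b = 0 := by
    intro b
    have h1 : psiAux k L ((1 : L) ⊗ₜ[k] b) =
        ∑ g : L ≃ₐ[k] L, (g b) • (Pi.single g 1 : (L ≃ₐ[k] L) → L) := by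
      ext g
      simp [Pi.single_apply, Finset.sum_apply, mul_comm]
    have := hfW ((1 : L) ⊗ₜ[k] b)
    rw [h1, map_sum] at this
    simpa [ha, mul_comm] using this
  have ha0 : a = 0 := by
    have := Fintype.linearIndependent_iff.1 hLI a ?_
    · funext g; exact this g
    · ext b
      simpa [mul_comm] using key b
  apply hf0
  refine LinearMap.ext fun x => ?_
  have hx : x = ∑ g : L ≃ₐ[k] L, (x g) • (Pi.single g 1 : (L ≃ₐ[k] L) → L) := by
    ext g
    simp [Pi.single_apply, Finset.sum_apply]
  rw [hx, map_sum]
  simp only [map_smul]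
  have : ∀ g : L ≃ₐ[k] L, f (Pi.single g (1 : L)) = 0 := by
    intro g
    have := congrFun ha0 g
    simpa [ha] using this
  simp [this]

lemma psiAux_bijective : Function.Bijective (psiAux k L) := by
  have hsurj := psiAux_surjective k L
  refine ⟨?_, hsurj⟩
  have hdim : Module.finrank L (L ⊗[k] L) =
      Module.finrank L ((L ≃ₐ[k] L) → L) := by
    rw [Module.finrank_baseChange, Module.finrank_pi,
      ← Nat.card_eq_fintype_card, IsGalois.card_aut_eq_finrank]
  exact (LinearMap.injective_iff_surjective_of_finrank_eq_finrank hdim).2 hsurj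

end Aux

/-- For a finite Galois extension `L/k` with group `G` and a finite-dimensional
`L`-vector space `V`, there is an additive isomorphism `V ⊗[k] L ≃ ⊕_{g ∈ G} V_g`
which intertwines the `L ⊗[k] L`-actions: the elementary tensor `a ⊗ b` acts on
`V ⊗[k] L` by `(a • v) ⊗ₜ (b * c)` and on the twist `V_g` by the scalar `a * g b`. -/
theorem stmt_3 (k L V : Type*) [Field k] [Field L] [Algebra k L]
    [FiniteDimensional k L] [IsGalois k L]
    [AddCommGroup V] [Module L V] [Module k V] [IsScalarTower k L V]
    [FiniteDimensional L V] :
    ∃ e : (V ⊗[k] L) ≃+ ((L ≃ₐ[k] L) → V),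
      ∀ (a b : L) (v : V) (c : L) (g : L ≃ₐ[k] L),
        e ((a • v) ⊗ₜ[k] (b * c)) g = (a * g b) • e (v ⊗ₜ[k] c) g := by
  classical
  let ψ : (L ⊗[k] L) ≃ₗ[L] ((L ≃ₐ[k] L) → L) :=
    LinearEquiv.ofBijective (psiAux k L) (psiAux_bijective k L)
  let E : (V ⊗[k] L) ≃ₗ[L] ((L ≃ₐ[k] L) → V) :=
    (TensorProduct.AlgebraTensorModule.cancelBaseChange k L L V L).symm ≪≫ₗ
      TensorProduct.congr (LinearEquiv.refl L V) ψ ≪≫ₗ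
      TensorProduct.piScalarRight L L V (L ≃ₐ[k] L)
  have hE : ∀ (v : V) (c : L) (g : L ≃ₐ[k] L),
      E (v ⊗ₜ[k] c) g = (g c) • v := by
    intro v c g
    simp [E, ψ, LinearEquiv.ofBijective_apply]
  refine ⟨E.toAddEquiv, fun a b v c g => ?_⟩
  show E ((a • v) ⊗ₜ[k] (b * c)) g = (a * g b) • E (v ⊗ₜ[k] c) g
  rw [hE, hE, map_mul, smul_smul, smul_smul]
  ring_nf
end

section
/- Let G be a finite group acting on a finite set E, let r be a G-equivariant binary relation on E, and suppose there is a linear order ≤ on E with r x y → x ≤ y. Define a relation r' on the set of G-orbits by: r' A B if and only if A ≠ B and there exist a ∈ A, b ∈ B with r a b. Then r' has no cycles; in particular, there exists a linear order on the set of G-orbits such that r' A B implies A < B. -/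
/-- For a finite group `G` acting on a finite set `E` with a `G`-equivariant relation `r`
compatible with a linear order, the induced relation `r'` on the set of `G`-orbits
(`r' A B` iff `A ≠ B` and some `a ∈ A`, `b ∈ B` satisfy `r a b`) has no cycles; in
particular there is a linear order on the orbits such that `r' A B` implies `A < B`. -/
theorem stmt_15 {G E : Type*} [Group G] [Finite G] [Fintype E] [MulAction G E]
    (r : E → E → Prop) (hequiv : ∀ (g : G) (x y : E), r x y → r (g • x) (g • y))
    (le : E → E → Prop) [IsLinearOrder E le] (hcomp : ∀ x y : E, r x y → le x y)
    (r' : Quotient (MulAction.orbitRel G E) → Quotient (MulAction.orbitRel G E) → Prop)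
    (hr' : ∀ A B, r' A B ↔ A ≠ B ∧ ∃ a b : E,
      Quotient.mk (MulAction.orbitRel G E) a = A ∧
      Quotient.mk (MulAction.orbitRel G E) b = B ∧ r a b) :
    (∀ A, ¬ Relation.TransGen r' A A) ∧
    ∃ le' : Quotient (MulAction.orbitRel G E) → Quotient (MulAction.orbitRel G E) → Prop,
      IsLinearOrder _ le' ∧ ∀ A B, r' A B → le' A B ∧ A ≠ B := by
  classical
  letI : LinearOrder E :=
    { le := le
      lt := fun a b => le a b ∧ ¬ le b a
      le_refl := fun a => Std.Refl.refl a
      le_trans := fun a b c => IsTrans.trans a b c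
      le_antisymm := fun a b => Std.Antisymm.antisymm a b
      le_total := fun a b => Std.Total.total a b
      lt_iff_le_not_ge := fun _ _ => Iff.rfl
      toDecidableLE := Classical.decRel le }
  set q : E → Quotient (MulAction.orbitRel G E) := Quotient.mk _ with hq
  let s : Quotient (MulAction.orbitRel G E) → Finset E :=
    fun A => Finset.univ.filter (fun x => q x = A)
  have hsne : ∀ A, (s A).Nonempty := fun A => ⟨A.out, by simp [s, hq, Quotient.out_eq]⟩
  set f : Quotient (MulAction.orbitRel G E) → E := fun A => (s A).max' (hsne A) with hf
  have hfmem : ∀ A, q (f A) = A := fun A => by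
    have := (s A).max'_mem (hsne A)
    simp only [s, Finset.mem_filter] at this
    exact this.2
  have hfle : ∀ A x, q x = A → le x (f A) := fun A x hx =>
    (s A).le_max' x (by simp [s, hx])
  have key : ∀ A B, r' A B → le (f A) (f B) ∧ f A ≠ f B := by
    intro A B h
    obtain ⟨hAB, a, b, ha, hb, hab⟩ := (hr' A B).1 h
    have h1 : q (f A) = q a := by rw [hfmem A, ← ha]
    obtain ⟨g, hg⟩ := MulAction.mem_orbit_iff.1 (Quotient.exact h1)
    have hr2 : r (f A) (g • b) := hg ▸ hequiv g a b hab
    have hqb : q (g • b) = B := by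
      rw [← hb]; exact Quotient.sound (MulAction.mem_orbit b g)
    have h2 : le (f A) (g • b) := hcomp _ _ hr2
    have h3 : le (g • b) (f B) := hfle B _ hqb
    refine ⟨IsTrans.trans _ _ _ h2 h3, ?_⟩
    intro hEq
    apply hAB
    rw [← hfmem A, ← hfmem B, hEq]
  have hTG : ∀ A B, Relation.TransGen r' A B → le (f A) (f B) ∧ f A ≠ f B := by
    intro A B h
    induction h with
    | single h => exact key _ _ h
    | tail _ h ih =>
      obtain ⟨h1, h2⟩ := ih
      obtain ⟨h3, h4⟩ := key _ _ h
      refine ⟨IsTrans.trans _ _ _ h1 h3, ?_⟩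
      intro hEq
      exact h2 (Std.Antisymm.antisymm _ _ h1 (hEq.symm ▸ h3))
  refine ⟨fun A h => (hTG A A h).2 rfl, fun A B => le (f A) (f B), ?_, ?_⟩
  · exact
      { refl := fun A => Std.Refl.refl _
        trans := fun A B C => IsTrans.trans _ _ _
        total := fun A B => Std.Total.total _ _
        antisymm := fun A B h1 h2 => by
          have hE : f A = f B := Std.Antisymm.antisymm _ _ h1 h2
          rw [← hfmem A, ← hfmem B, hE] }
  · intro A B h
    exact ⟨(key A B h).1, ((hr' A B).1 h).1⟩
end
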